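/- arXiv:2305.02458 — 5 statements merged into one kernel-verified Lean document; each statement's English description precedes it below -/
import Mathlib

section
/- Let T : ℝ^n → ℝ^n be a Shapley operator and suppose the ergodic equation is solvable, i.e., there exist u ∈ ℝ^n and λ ∈ ℝ with T(u) = λe + u. Then for every v ∈ ℝ^n, the sequence k^{−1} T^k(v) converges to λe as k → ∞. -/
open Filter Topology

/-! A Shapley operator is nonexpansive for the sup norm, hence so are its iterates. Since
`T^k(u) = u + kλe`, the orbit of any `v` stays within distance `‖v - u‖` of `u + kλe`, and
dividing by `k` gives the limit `λe`. -/

section ShapleyOperator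

variable {ι : Type*} {T : (ι → ℝ) → (ι → ℝ)}

lemma apply_le_add_of_le_add (hmono : Monotone T)
    (hhom : ∀ (x : ι → ℝ) (c : ℝ), T (fun i => x i + c) = fun i => T x i + c)
    {x y : ι → ℝ} {c : ℝ} (h : ∀ i, x i ≤ y i + c) (i : ι) : T x i ≤ T y i + c := by
  have hle : T x ≤ T (fun i => y i + c) := hmono h
  simpa only [hhom] using hle i

lemma lipschitzWith_one_of_monotone_of_add_const [Fintype ι] (hmono : Monotone T)
    (hhom : ∀ (x : ι → ℝ) (c : ℝ), T (fun i => x i + c) = fun i => T x i + c) :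
    LipschitzWith 1 T := by
  refine LipschitzWith.of_dist_le_mul fun x y => ?_
  have hxy : ∀ i, |x i - y i| ≤ dist x y := fun i => by
    simpa only [Real.dist_eq] using dist_le_pi_dist x y i
  have hx : ∀ i, x i ≤ y i + dist x y := fun i => by linarith [(abs_le.mp (hxy i)).2]
  have hy : ∀ i, y i ≤ x i + dist x y := fun i => by linarith [(abs_le.mp (hxy i)).1]
  rw [NNReal.coe_one, one_mul, dist_pi_le_iff dist_nonneg]
  intro i
  rw [Real.dist_eq, abs_le]
  constructor
  · linarith [apply_le_add_of_le_add hmono hhom hy i]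
  · linarith [apply_le_add_of_le_add hmono hhom hx i]

lemma iterate_eq_add_of_eq_add
    (hhom : ∀ (x : ι → ℝ) (c : ℝ), T (fun i => x i + c) = fun i => T x i + c)
    {u : ι → ℝ} {lam : ℝ} (hu : T u = fun i => lam + u i) (k : ℕ) :
    T^[k] u = fun i => u i + k * lam := by
  induction k with
  | zero => simp
  | succ k ih =>
    rw [Function.iterate_succ_apply', ih, hhom, hu]
    funext i
    push_cast
    ring

end ShapleyOperator

lemma tendsto_inv_smul_of_norm_sub_smul_le {E : Type*} [NormedAddCommGroup E] [NormedSpace ℝ E]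
    {x : ℕ → E} {a : E} {C : ℝ} (h : ∀ k : ℕ, ‖x k - (k : ℝ) • a‖ ≤ C) :
    Tendsto (fun k : ℕ => (k : ℝ)⁻¹ • x k) atTop (𝓝 a) := by
  rw [← tendsto_sub_nhds_zero_iff]
  refine squeeze_zero_norm' (a := fun k : ℕ => (k : ℝ)⁻¹ * C) ?_ ?_
  · filter_upwards [eventually_ne_atTop 0] with k hk
    have hk' : (k : ℝ) ≠ 0 := Nat.cast_ne_zero.mpr hk
    calc ‖(k : ℝ)⁻¹ • x k - a‖ = ‖(k : ℝ)⁻¹ • (x k - (k : ℝ) • a)‖ := by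
          rw [smul_sub, inv_smul_smul₀ hk']
      _ ≤ (k : ℝ)⁻¹ * C := by
          rw [norm_smul, Real.norm_of_nonneg (by positivity)]
          exact mul_le_mul_of_nonneg_left (h k) (by positivity)
  · simpa using (tendsto_inv_atTop_zero.comp tendsto_natCast_atTop_atTop).mul_const C

theorem escape_rate_of_ergodic_general {n : ℕ}
    (T : (Fin n → ℝ) → (Fin n → ℝ))
    (hmono : Monotone T)
    (hhom : ∀ (x : Fin n → ℝ) (c : ℝ), T (fun i => x i + c) = fun i => T x i + c)
    (u : Fin n → ℝ) (lam : ℝ)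
    (hu : T u = fun i => lam + u i) :
    ∀ v : Fin n → ℝ,
      Filter.Tendsto (fun k : ℕ => (k : ℝ)⁻¹ • T^[k] v) Filter.atTop
        (nhds (fun _ => lam)) := by
  intro v
  have hlip := lipschitzWith_one_of_monotone_of_add_const hmono hhom
  refine tendsto_inv_smul_of_norm_sub_smul_le (C := ‖v - u‖ + ‖u‖) fun k => ?_
  have horbit_u : T^[k] u - (k : ℝ) • (fun _ => lam) = u := by
    rw [iterate_eq_add_of_eq_add hhom hu k]
    funext i
    simp
  calc ‖T^[k] v - (k : ℝ) • (fun _ => lam)‖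
      = ‖(T^[k] v - T^[k] u) + (T^[k] u - (k : ℝ) • (fun _ => lam))‖ := by
        rw [sub_add_sub_cancel]
    _ ≤ ‖T^[k] v - T^[k] u‖ + ‖u‖ := by rw [horbit_u]; exact norm_add_le _ _
    _ ≤ ‖v - u‖ + ‖u‖ := by
        gcongr
        simpa only [← dist_eq_norm, NNReal.coe_pow, NNReal.coe_one, one_pow, one_mul] using
          (hlip.iterate k).dist_le_mul v u

/-- If the ergodic equation `T(u) = λe + u` is solvable for a Shapley operator `T`,
then for every `v`, `k⁻¹ T^k(v)` converges to `λe` as `k → ∞`. -/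
theorem escape_rate_of_ergodic {n : ℕ} (hn : 0 < n)
    (T : (Fin n → ℝ) → (Fin n → ℝ))
    (hmono : Monotone T)
    (hhom : ∀ (x : Fin n → ℝ) (c : ℝ), T (fun i => x i + c) = fun i => T x i + c)
    (u : Fin n → ℝ) (lam : ℝ)
    (hu : T u = fun i => lam + u i) :
    ∀ v : Fin n → ℝ,
      Filter.Tendsto (fun k : ℕ => (k : ℝ)⁻¹ • T^[k] v) Filter.atTop
        (nhds (fun _ => lam)) :=
  escape_rate_of_ergodic_general T hmono hhom u lam hu
end

section
/- Let T : ℝ^n → ℝ^n be a Shapley operator and suppose that for some integer q ≥ 1 and some real 0 < γ < 1, the iterate T^q is a γ-contraction in the Hilbert seminorm, i.e., ‖T^q(x) − T^q(y)‖_H ≤ γ‖x − y‖_H for all x, y ∈ ℝ^n. Then the ergodic equation is solvable: there exist u ∈ ℝ^n and λ ∈ ℝ such that T(u) = λe + u. -/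
/-- Hilbert's seminorm `‖x‖_H = max_i x_i - min_i x_i` on `ℝ^n`. -/
noncomputable def hilbertSeminorm {n : ℕ} (x : Fin n → ℝ) : ℝ :=
  (⨆ i, x i) - (⨅ i, x i)

/-!
Write `N = normalizeAt i₀`, which subtracts the `i₀`-th coordinate. On vectors vanishing at `i₀`
the sup norm lies between `‖·‖_H / 2` and `‖·‖_H`, and `‖·‖_H` ignores multiples of `e`. Since `T`
commutes with adding constants, `N ∘ T^[q k]` is therefore `2 γ^k`-Lipschitz for the sup metric,
hence a contraction once `γ^k < 1/2`. Its unique fixed point `u` is also fixed by the commuting map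
`N ∘ T`, which says exactly that `T u - u` is constant.
-/

open Function NNReal

section HilbertSeminorm

variable {n : ℕ}

lemma sub_le_hilbertSeminorm (x : Fin n → ℝ) (i j : Fin n) : x i - x j ≤ hilbertSeminorm x :=
  sub_le_sub (le_ciSup (Finite.bddAbove_range x) i) (ciInf_le (Finite.bddBelow_range x) j)

variable [Nonempty (Fin n)]

lemma hilbertSeminorm_add_const (x : Fin n → ℝ) (c : ℝ) :
    hilbertSeminorm (fun i => x i + c) = hilbertSeminorm x := by
  unfold hilbertSeminorm
  rw [← ciSup_add (Finite.bddAbove_range x) c, ← ciInf_add (Finite.bddBelow_range x) c]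
  ring

lemma hilbertSeminorm_nonneg (x : Fin n → ℝ) : 0 ≤ hilbertSeminorm x := by
  obtain ⟨i⟩ := ‹Nonempty (Fin n)›
  simpa using sub_le_hilbertSeminorm x i i

lemma hilbertSeminorm_le_two_mul_norm (x : Fin n → ℝ) : hilbertSeminorm x ≤ 2 * ‖x‖ := by
  have hsup : (⨆ i, x i) ≤ ‖x‖ :=
    ciSup_le fun i => (le_abs_self _).trans (norm_le_pi_norm x i)
  have hinf : -‖x‖ ≤ ⨅ i, x i :=
    le_ciInf fun i => (neg_abs_le (x i)).trans' (neg_le_neg (norm_le_pi_norm x i))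
  unfold hilbertSeminorm
  linarith

lemma norm_le_hilbertSeminorm_of_apply_eq_zero {x : Fin n → ℝ} {i₀ : Fin n}
    (hx : x i₀ = 0) :
    ‖x‖ ≤ hilbertSeminorm x := by
  refine (pi_norm_le_iff_of_nonneg (hilbertSeminorm_nonneg x)).2 fun i => ?_
  rw [Real.norm_eq_abs, abs_le]
  have h₁ := sub_le_hilbertSeminorm x i i₀
  have h₂ := sub_le_hilbertSeminorm x i₀ i
  rw [hx] at h₁ h₂
  constructor <;> linarith

end HilbertSeminorm

lemma iterate_mul_le_pow_mul {α : Type*} {f : α → α} {d : α → α → ℝ} {q : ℕ} {γ : ℝ}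
    (hγ : 0 ≤ γ) (hf : ∀ x y, d (f^[q] x) (f^[q] y) ≤ γ * d x y) (k : ℕ) (x y : α) :
    d (f^[q * k] x) (f^[q * k] y) ≤ γ ^ k * d x y := by
  induction k with
  | zero => simp
  | succ k ih =>
    rw [iterate_mul, iterate_succ_apply', iterate_succ_apply', ← iterate_mul]
    calc d (f^[q] (f^[q * k] x)) (f^[q] (f^[q * k] y))
        ≤ γ * d (f^[q * k] x) (f^[q * k] y) := hf _ _
      _ ≤ γ * (γ ^ k * d x y) := mul_le_mul_of_nonneg_left ih hγ
      _ = γ ^ (k + 1) * d x y := by ring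

lemma ContractingWith.isFixedPt_fixedPoint_of_commute {α : Type*} [MetricSpace α] [Nonempty α]
    [CompleteSpace α] {K : ℝ≥0} {f g : α → α} (hf : ContractingWith K f)
    (hgf : Function.Commute g f) :
    IsFixedPt g (fixedPoint f hf) :=
  hf.fixedPoint_unique (hf.fixedPoint_isFixedPt.map hgf)

lemma iterate_add_const {n : ℕ} {S : (Fin n → ℝ) → Fin n → ℝ}
    (hS : ∀ x c, S (fun i => x i + c) = fun i => S x i + c) (m : ℕ) (x : Fin n → ℝ)
    (c : ℝ) :
    S^[m] (fun i => x i + c) = fun i => S^[m] x i + c :=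
  (show Function.Commute S fun x i => x i + c from fun x => hS x c).iterate_left m x

section Normalize

variable {n : ℕ} (i₀ : Fin n)

def normalizeAt (x : Fin n → ℝ) : Fin n → ℝ := fun i => x i - x i₀

lemma normalizeAt_add_const (x : Fin n → ℝ) (c : ℝ) :
    normalizeAt i₀ (fun i => x i + c) = normalizeAt i₀ x := by
  funext i
  simp only [normalizeAt]
  ring

lemma normalizeAt_apply_normalizeAt {S : (Fin n → ℝ) → Fin n → ℝ}
    (hS : ∀ x c, S (fun i => x i + c) = fun i => S x i + c) (x : Fin n → ℝ) :
    normalizeAt i₀ (S (normalizeAt i₀ x)) = normalizeAt i₀ (S x) := by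
  have : normalizeAt i₀ x = fun i => x i + -x i₀ := funext fun i => sub_eq_add_neg _ _
  rw [this, hS, normalizeAt_add_const]

lemma commute_normalizeAt_comp {S R : (Fin n → ℝ) → Fin n → ℝ}
    (hS : ∀ x c, S (fun i => x i + c) = fun i => S x i + c)
    (hR : ∀ x c, R (fun i => x i + c) = fun i => R x i + c) (hSR : Function.Commute S R) :
    Function.Commute (normalizeAt i₀ ∘ S) (normalizeAt i₀ ∘ R) := fun x => by
  simp only [comp_apply, normalizeAt_apply_normalizeAt i₀ hS,
    normalizeAt_apply_normalizeAt i₀ hR, hSR x]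

lemma dist_normalizeAt_le_hilbertSeminorm (x y : Fin n → ℝ) :
    dist (normalizeAt i₀ x) (normalizeAt i₀ y) ≤ hilbertSeminorm (x - y) := by
  have : Nonempty (Fin n) := ⟨i₀⟩
  have hsub : normalizeAt i₀ x - normalizeAt i₀ y = fun i => (x - y) i + -(x - y) i₀ := by
    funext i
    simp only [normalizeAt, Pi.sub_apply]
    ring
  rw [dist_eq_norm, ← hilbertSeminorm_add_const (x - y) (-(x - y) i₀), ← hsub]
  exact norm_le_hilbertSeminorm_of_apply_eq_zero (i₀ := i₀) (by simp [normalizeAt])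

lemma lipschitzWith_normalizeAt_comp {S : (Fin n → ℝ) → Fin n → ℝ} {c : ℝ≥0}
    (hS : ∀ x y, hilbertSeminorm (S x - S y) ≤ c * hilbertSeminorm (x - y)) :
    LipschitzWith (2 * c) (normalizeAt i₀ ∘ S) := by
  have : Nonempty (Fin n) := ⟨i₀⟩
  refine LipschitzWith.of_dist_le_mul fun x y => ?_
  calc dist (normalizeAt i₀ (S x)) (normalizeAt i₀ (S y))
      ≤ hilbertSeminorm (S x - S y) := dist_normalizeAt_le_hilbertSeminorm i₀ _ _
    _ ≤ c * hilbertSeminorm (x - y) := hS x y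
    _ ≤ c * (2 * ‖x - y‖) := mul_le_mul_of_nonneg_left (hilbertSeminorm_le_two_mul_norm _) c.2
    _ = ↑(2 * c) * dist x y := by rw [dist_eq_norm]; push_cast; ring

lemma eq_add_of_isFixedPt_normalizeAt_comp {T : (Fin n → ℝ) → Fin n → ℝ} {u : Fin n → ℝ}
    (hu : IsFixedPt (normalizeAt i₀ ∘ T) u) : T u = fun i => T u i₀ + u i := by
  funext i
  have := congrFun hu i
  simp only [comp_apply, normalizeAt] at this
  linarith

end Normalize

theorem ergodic_of_contraction_general {n : ℕ} (hn : 0 < n)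
    (T : (Fin n → ℝ) → (Fin n → ℝ))
    (hhom : ∀ (x : Fin n → ℝ) (c : ℝ), T (fun i => x i + c) = fun i => T x i + c)
    (q : ℕ) (γ : ℝ) (hγ0 : 0 < γ) (hγ1 : γ < 1)
    (hcontr : ∀ x y : Fin n → ℝ,
      hilbertSeminorm (T^[q] x - T^[q] y) ≤ γ * hilbertSeminorm (x - y)) :
    ∃ (u : Fin n → ℝ) (lam : ℝ), T u = fun i => lam + u i := by
  let i₀ : Fin n := ⟨0, hn⟩
  obtain ⟨k, hk⟩ := exists_pow_lt_of_lt_one one_half_pos hγ1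
  let K : ℝ≥0 := ⟨γ ^ k, by positivity⟩
  have hG : ContractingWith (2 * K) (normalizeAt i₀ ∘ T^[q * k]) := by
    refine ⟨?_, lipschitzWith_normalizeAt_comp i₀
      (iterate_mul_le_pow_mul (d := fun x y => hilbertSeminorm (x - y)) hγ0.le hcontr k)⟩
    rw [← NNReal.coe_lt_coe]
    change 2 * γ ^ k < 1
    linarith
  have hFG : Function.Commute (normalizeAt i₀ ∘ T) (normalizeAt i₀ ∘ T^[q * k]) :=
    commute_normalizeAt_comp i₀ hhom (iterate_add_const hhom _)
      (Function.Commute.self_iterate T _)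
  exact ⟨_, _, eq_add_of_isFixedPt_normalizeAt_comp i₀ (hG.isFixedPt_fixedPoint_of_commute hFG)⟩

/-- If some iterate `T^q` of a Shapley operator `T` is a `γ`-contraction in
Hilbert's seminorm, with `0 < γ < 1`, then the ergodic equation `T(u) = λe + u`
is solvable. -/
theorem ergodic_of_contraction {n : ℕ} (hn : 0 < n)
    (T : (Fin n → ℝ) → (Fin n → ℝ))
    (hmono : Monotone T)
    (hhom : ∀ (x : Fin n → ℝ) (c : ℝ), T (fun i => x i + c) = fun i => T x i + c)
    (q : ℕ) (hq : 1 ≤ q) (γ : ℝ) (hγ0 : 0 < γ) (hγ1 : γ < 1)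
    (hcontr : ∀ x y : Fin n → ℝ,
      hilbertSeminorm (T^[q] x - T^[q] y) ≤ γ * hilbertSeminorm (x - y)) :
    ∃ (u : Fin n → ℝ) (lam : ℝ), T u = fun i => lam + u i :=
  ergodic_of_contraction_general hn T hhom q γ hγ0 hγ1 hcontr
end

section
/- Let Q_1, …, Q_n be n×n row-stochastic matrices, each of which is unichain and has all diagonal entries strictly positive. Then for every pair of indices i₁, i₂ ∈ {1,…,n} there exists j ∈ {1,…,n} such that both (Q_1 Q_2 ⋯ Q_n)_{i₁ j} > 0 and (Q_1 Q_2 ⋯ Q_n)_{i₂ j} > 0; that is, any two rows of the product of any n such matrices have intersecting supports. -/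
/-!
Right multiplication by a nonnegative matrix with positive diagonal can only enlarge row
supports. Suppose rows `i₁, i₂` of `P * A` have disjoint supports, `A` being unichain. If neither
support of `P` grew, each is closed under the arcs of `A`, hence contains a final class of `A`;
these coincide, so the supports would meet. Thus, as long as the two supports of
`Q₁ ⋯ Q_k` are disjoint, their total size is at least `k + 2`, which is impossible in `Fin n`
for `k = n`.
-/

/-- Reachability in the digraph associated to a nonnegative matrix `M`:
there is an arc from `i` to `j` whenever `M i j > 0`. -/
def Reaches {n : ℕ} (M : Matrix (Fin n) (Fin n) ℝ) : Fin n → Fin n → Prop :=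
  Relation.ReflTransGen (fun i j => 0 < M i j)

/-- `C` is a final (strongly connected) class of the digraph of `M`:
it is nonempty, strongly connected, and closed under the arcs of `M`. -/
def IsFinalClass {n : ℕ} (M : Matrix (Fin n) (Fin n) ℝ) (C : Set (Fin n)) : Prop :=
  C.Nonempty ∧ (∀ i ∈ C, ∀ j ∈ C, Reaches M i j) ∧ (∀ i ∈ C, ∀ j, 0 < M i j → j ∈ C)

/-- A nonnegative matrix is unichain if its digraph has a unique final
strongly connected component. -/
def Unichain {n : ℕ} (M : Matrix (Fin n) (Fin n) ℝ) : Prop :=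
  ∃! C : Set (Fin n), IsFinalClass M C

namespace Matrix

variable {ι α : Type*} [Fintype ι] [Semiring α] [PartialOrder α]

lemma mul_apply_nonneg [IsOrderedRing α] {A B : Matrix ι ι α}
    (hA : ∀ i j, 0 ≤ A i j) (hB : ∀ i j, 0 ≤ B i j) (i j : ι) : 0 ≤ (A * B) i j :=
  Finset.sum_nonneg fun k _ => mul_nonneg (hA i k) (hB k j)

lemma mul_apply_pos [IsStrictOrderedRing α] {A B : Matrix ι ι α}
    (hA : ∀ i j, 0 ≤ A i j) (hB : ∀ i j, 0 ≤ B i j) {i k j : ι}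
    (hik : 0 < A i k) (hkj : 0 < B k j) : 0 < (A * B) i j :=
  Finset.sum_pos' (fun l _ => mul_nonneg (hA i l) (hB l j))
    ⟨k, Finset.mem_univ k, mul_pos hik hkj⟩

variable [DecidableEq ι]

lemma list_prod_apply_nonneg [IsOrderedRing α] {L : List (Matrix ι ι α)}
    (hL : ∀ A ∈ L, ∀ i j, 0 ≤ A i j) (i j : ι) : 0 ≤ L.prod i j := by
  induction L generalizing i j with
  | nil => by_cases hij : i = j <;> simp [hij]
  | cons A L ih =>
    rw [List.forall_mem_cons] at hL
    exact mul_apply_nonneg hL.1 (ih hL.2) i j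

lemma list_prod_apply_self_pos [IsStrictOrderedRing α] {L : List (Matrix ι ι α)}
    (hL : ∀ A ∈ L, ∀ i j, 0 ≤ A i j) (hdiag : ∀ A ∈ L, ∀ i, 0 < A i i) (i : ι) :
    0 < L.prod i i := by
  induction L with
  | nil => simp
  | cons A L ih =>
    rw [List.forall_mem_cons] at hL hdiag
    exact mul_apply_pos hL.1 (list_prod_apply_nonneg hL.2) (hdiag.1 i) (ih hL.2 hdiag.2)

end Matrix

open Matrix Finset

section FinalClass

variable {n : ℕ} {M : Matrix (Fin n) (Fin n) ℝ}

def IsForwardClosed (M : Matrix (Fin n) (Fin n) ℝ) (S : Set (Fin n)) : Prop :=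
  ∀ i ∈ S, ∀ j, 0 < M i j → j ∈ S

lemma Reaches.mem_of_isForwardClosed {S : Set (Fin n)} (hS : IsForwardClosed M S)
    {a b : Fin n} (hab : Reaches M a b) (ha : a ∈ S) : b ∈ S := by
  induction hab with
  | refl => exact ha
  | tail _ hbc ih => exact hS _ ih _ hbc

lemma exists_isFinalClass_subset {S : Set (Fin n)} (hne : S.Nonempty)
    (hS : IsForwardClosed M S) :
    ∃ C, IsFinalClass M C ∧ C ⊆ S := by
  classical
  let R : Fin n → Finset (Fin n) := fun a => {k | Reaches M a k}
  have hR_anti {a b : Fin n} (hab : Reaches M a b) : R b ⊆ R a := fun k hk => by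
    simp only [R, mem_filter, mem_univ, true_and] at hk ⊢
    exact hab.trans hk
  -- A point of `S` reaching the fewest states generates a final class: every state it reaches
  -- reaches exactly the same states, in particular reaches back.
  obtain ⟨j, hjS, hjmin⟩ := S.exists_min_image (fun a => #(R a)) S.toFinite hne
  refine ⟨{k | Reaches M j k}, ⟨⟨j, .refl⟩, fun a ha b hb => ?_, fun a ha b hab => ha.tail hab⟩,
    fun k hk => hk.mem_of_isForwardClosed hS hjS⟩
  have hRa : R a = R j :=
    eq_of_subset_of_card_le (hR_anti ha) (hjmin a (ha.mem_of_isForwardClosed hS hjS))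
  have hb : b ∈ R a := by simpa [R, hRa] using hb
  simpa [R] using hb

lemma Unichain.inter_nonempty (hM : Unichain M) {S T : Set (Fin n)}
    (hS : S.Nonempty) (hSM : IsForwardClosed M S) (hT : T.Nonempty) (hTM : IsForwardClosed M T) :
    (S ∩ T).Nonempty := by
  obtain ⟨C, hC, hCS⟩ := exists_isFinalClass_subset hS hSM
  obtain ⟨D, hD, hDT⟩ := exists_isFinalClass_subset hT hTM
  obtain ⟨c, hc⟩ := hC.1
  exact ⟨c, hCS hc, hDT (hM.unique hC hD ▸ hc)⟩

end FinalClass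

section RowSupport

variable {ι : Type*} [Fintype ι]

noncomputable def rowSupport (A : Matrix ι ι ℝ) (i : ι) : Finset ι :=
  open Classical in {j | 0 < A i j}

@[simp]
lemma mem_rowSupport {A : Matrix ι ι ℝ} {i j : ι} : j ∈ rowSupport A i ↔ 0 < A i j := by
  simp [rowSupport]

@[simp]
lemma rowSupport_one [DecidableEq ι] (i : ι) : rowSupport (1 : Matrix ι ι ℝ) i = {i} := by
  ext j
  by_cases hij : i = j <;> simp [one_apply, hij, eq_comm]

lemma rowSupport_subset_mul {P A : Matrix ι ι ℝ}
    (hP : ∀ i j, 0 ≤ P i j) (hA : ∀ i j, 0 ≤ A i j) (hdiag : ∀ i, 0 < A i i) (i : ι) :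
    rowSupport P i ⊆ rowSupport (P * A) i := fun j hj => by
  simpa using mul_apply_pos hP hA (mem_rowSupport.1 hj) (hdiag j)

end RowSupport

section RowSupportGrowth

variable {n : ℕ}

lemma isForwardClosed_rowSupport {P A : Matrix (Fin n) (Fin n) ℝ}
    (hP : ∀ i j, 0 ≤ P i j) (hA : ∀ i j, 0 ≤ A i j) {i : Fin n}
    (h : rowSupport (P * A) i ⊆ rowSupport P i) : IsForwardClosed A (rowSupport P i) :=
  fun _ hk _ hkj => h (mem_rowSupport.2 (mul_apply_pos hP hA (mem_rowSupport.1 hk) hkj))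

lemma card_rowSupport_add_lt_mul {P A : Matrix (Fin n) (Fin n) ℝ}
    (hP : ∀ i j, 0 ≤ P i j) (hA : ∀ i j, 0 ≤ A i j) (hdiag : ∀ i, 0 < A i i)
    (hAuni : Unichain A) {i₁ i₂ : Fin n}
    (h₁ : (rowSupport P i₁).Nonempty) (h₂ : (rowSupport P i₂).Nonempty)
    (hdisj : Disjoint (rowSupport (P * A) i₁) (rowSupport (P * A) i₂)) :
    #(rowSupport P i₁) + #(rowSupport P i₂) <
      #(rowSupport (P * A) i₁) + #(rowSupport (P * A) i₂) := by
  have hsub₁ := rowSupport_subset_mul hP hA hdiag i₁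
  have hsub₂ := rowSupport_subset_mul hP hA hdiag i₂
  by_contra! hle
  have hc₁ := card_le_card hsub₁
  have hc₂ := card_le_card hsub₂
  have heq₁ := eq_of_subset_of_card_le hsub₁ (by omega)
  have heq₂ := eq_of_subset_of_card_le hsub₂ (by omega)
  obtain ⟨c, hc₁, hc₂⟩ := hAuni.inter_nonempty (coe_nonempty.2 h₁)
    (isForwardClosed_rowSupport hP hA heq₁.ge) (coe_nonempty.2 h₂)
    (isForwardClosed_rowSupport hP hA heq₂.ge)
  exact disjoint_left.1 hdisj (hsub₁ hc₁) (hsub₂ hc₂)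

lemma length_add_two_le_card_rowSupport_prod {L : List (Matrix (Fin n) (Fin n) ℝ)}
    (hnn : ∀ A ∈ L, ∀ i j, 0 ≤ A i j) (hdiag : ∀ A ∈ L, ∀ i, 0 < A i i)
    (huni : ∀ A ∈ L, Unichain A) {i₁ i₂ : Fin n}
    (hdisj : Disjoint (rowSupport L.prod i₁) (rowSupport L.prod i₂)) :
    L.length + 2 ≤ #(rowSupport L.prod i₁) + #(rowSupport L.prod i₂) := by
  induction L using List.reverseRecOn with
  | nil => simp
  | append_singleton L A ih =>
    simp only [List.forall_mem_append, List.forall_mem_singleton] at hnn hdiag huni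
    rw [List.prod_append, List.prod_singleton] at hdisj ⊢
    have hLnn := list_prod_apply_nonneg hnn.1
    have hself (i : Fin n) : i ∈ rowSupport L.prod i :=
      mem_rowSupport.2 (list_prod_apply_self_pos hnn.1 hdiag.1 i)
    have hsub := rowSupport_subset_mul hLnn hnn.2 hdiag.2
    have hL := ih hnn.1 hdiag.1 huni.1 (hdisj.mono (hsub i₁) (hsub i₂))
    have hstep := card_rowSupport_add_lt_mul hLnn hnn.2 hdiag.2 huni.2 ⟨i₁, hself i₁⟩
      ⟨i₂, hself i₂⟩ hdisj
    simp only [List.length_append, List.length_singleton]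
    omega

end RowSupportGrowth

theorem unichain_product_rows_intersect_general {n : ℕ}
    (Q : Fin n → Matrix (Fin n) (Fin n) ℝ)
    (hnn : ∀ m i j, 0 ≤ Q m i j)
    (huni : ∀ m, Unichain (Q m)) (hdiag : ∀ m i, 0 < Q m i i) :
    ∀ i₁ i₂ : Fin n, ∃ j : Fin n,
      0 < (List.ofFn Q).prod i₁ j ∧ 0 < (List.ofFn Q).prod i₂ j := by
  intro i₁ i₂
  by_contra! hrows
  have hdisj : Disjoint (rowSupport (List.ofFn Q).prod i₁) (rowSupport (List.ofFn Q).prod i₂) :=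
    disjoint_left.2 fun j hj₁ hj₂ =>
      (hrows j (mem_rowSupport.1 hj₁)).not_gt (mem_rowSupport.1 hj₂)
  have hgrow := length_add_two_le_card_rowSupport_prod (List.forall_mem_ofFn_iff.2 hnn)
    (List.forall_mem_ofFn_iff.2 hdiag) (List.forall_mem_ofFn_iff.2 huni) hdisj
  have hfit := card_union_of_disjoint hdisj ▸ card_le_univ (_ ∪ _)
  simp only [List.length_ofFn, Fintype.card_fin] at hgrow hfit
  omega

/-- For `n` row-stochastic unichain matrices with positive diagonals, any two
rows of their product have intersecting supports. -/
theorem unichain_product_rows_intersect {n : ℕ} (hn : 0 < n)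
    (Q : Fin n → Matrix (Fin n) (Fin n) ℝ)
    (hnn : ∀ m i j, 0 ≤ Q m i j) (hrow : ∀ m i, ∑ j, Q m i j = 1)
    (huni : ∀ m, Unichain (Q m)) (hdiag : ∀ m i, 0 < Q m i i) :
    ∀ i₁ i₂ : Fin n, ∃ j : Fin n,
      0 < (List.ofFn Q).prod i₁ j ∧ 0 < (List.ofFn Q).prod i₂ j :=
  unichain_product_rows_intersect_general Q hnn huni hdiag
end

section
/- Let 0 < θ ≤ 1, let k ≥ 1, and let Q_1, …, Q_k be n×n row-stochastic matrices such that every nonzero entry of each Q_m is at least θ, and such that for every pair of indices i₁, i₂ ∈ {1,…,n} there exists j with (Q_1⋯Q_k)_{i₁ j} > 0 and (Q_1⋯Q_k)_{i₂ j} > 0. Then for every h ∈ ℝ^n, ‖(Q_1⋯Q_k) h‖_H ≤ (1 − θ^k) ‖h‖_H. -/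
open Matrix Finset

section EntryBound

variable {ι R : Type*} [Fintype ι] [Semiring R] [PartialOrder R] [IsOrderedRing R]

theorem Matrix.le_mul_apply_of_ne_zero {A B : Matrix ι ι R} {a b : R} (hb : 0 ≤ b)
    (hA : ∀ i j, 0 ≤ A i j) (hB : ∀ i j, 0 ≤ B i j)
    (hAa : ∀ i j, A i j ≠ 0 → a ≤ A i j) (hBb : ∀ i j, B i j ≠ 0 → b ≤ B i j)
    {i j : ι} (hAB : (A * B) i j ≠ 0) : a * b ≤ (A * B) i j := by
  rw [mul_apply] at hAB ⊢
  obtain ⟨l, -, hl⟩ := exists_ne_zero_of_sum_ne_zero hAB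
  calc a * b ≤ A i l * B l j :=
        mul_le_mul (hAa i l (left_ne_zero_of_mul hl)) (hBb l j (right_ne_zero_of_mul hl)) hb
          (hA i l)
    _ ≤ ∑ l, A i l * B l j :=
        single_le_sum (f := fun l => A i l * B l j) (fun l _ => mul_nonneg (hA i l) (hB l j))
          (mem_univ l)

theorem Matrix.pow_length_le_list_prod_apply_of_ne_zero [DecidableEq ι] {θ : R} (hθ : 0 ≤ θ)
    {L : List (Matrix ι ι R)} (hL : ∀ A ∈ L, A ∈ rowStochastic R ι)
    (hLθ : ∀ A ∈ L, ∀ i j, A i j ≠ 0 → θ ≤ A i j) {i j : ι} (hij : L.prod i j ≠ 0) :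
    θ ^ L.length ≤ L.prod i j := by
  induction L generalizing i j with
  | nil =>
    obtain rfl : i = j := by by_contra hne; exact hij (one_apply_ne hne)
    simp
  | cons A L ih =>
    simp only [List.forall_mem_cons] at hL hLθ
    rw [List.length_cons, pow_succ', List.prod_cons]
    rw [List.prod_cons] at hij
    exact le_mul_apply_of_ne_zero (pow_nonneg hθ _) (fun _ _ => nonneg_of_mem_rowStochastic hL.1)
      (fun _ _ => nonneg_of_mem_rowStochastic (Submonoid.list_prod_mem _ hL.2)) hLθ.1
      (fun _ _ => ih hL.2 hLθ.2) hij

end EntryBound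

section Averages

variable {ι : Type*} [Fintype ι] [DecidableEq ι] {p h : ι → ℝ} {δ t b : ℝ} {j₀ : ι}

theorem sum_mul_le_of_le_apply (hp : ∀ j, 0 ≤ p j) (hp1 : ∑ j, p j = 1) (hδ : δ ≤ p j₀)
    (ht : ∀ j, h j ≤ t) : ∑ j, p j * h j ≤ δ * h j₀ + (1 - δ) * t := by
  have hrest : ∑ j ∈ univ.erase j₀, p j * (h j - t) ≤ 0 :=
    sum_nonpos fun j _ => mul_nonpos_of_nonneg_of_nonpos (hp j) (sub_nonpos.2 (ht j))
  have hj₀ : p j₀ * (h j₀ - t) ≤ δ * (h j₀ - t) :=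
    mul_le_mul_of_nonpos_right hδ (sub_nonpos.2 (ht j₀))
  calc ∑ j, p j * h j = ∑ j, p j * (h j - t) + t := by
        simp only [mul_sub, sum_sub_distrib, ← sum_mul, hp1]; ring
    _ = p j₀ * (h j₀ - t) + ∑ j ∈ univ.erase j₀, p j * (h j - t) + t := by
        rw [← add_sum_erase _ _ (mem_univ j₀)]
    _ ≤ δ * h j₀ + (1 - δ) * t := by linarith

theorem le_sum_mul_of_le_apply (hp : ∀ j, 0 ≤ p j) (hp1 : ∑ j, p j = 1) (hδ : δ ≤ p j₀)
    (hb : ∀ j, b ≤ h j) : δ * h j₀ + (1 - δ) * b ≤ ∑ j, p j * h j := by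
  have := sum_mul_le_of_le_apply (h := -h) (t := -b) hp hp1 hδ (fun j => neg_le_neg (hb j))
  simp only [Pi.neg_apply, mul_neg, sum_neg_distrib] at this
  linarith

end Averages

theorem hilbertSeminorm_le_of_forall_sub_le {n : ℕ} [Nonempty (Fin n)] {x : Fin n → ℝ} {c : ℝ}
    (hx : ∀ i₁ i₂, x i₁ - x i₂ ≤ c) : hilbertSeminorm x ≤ c := by
  have hle : ⨆ i, x i ≤ c + ⨅ i, x i :=
    ciSup_le fun i₁ => sub_le_iff_le_add'.1 (le_ciInf fun i₂ => sub_le_comm.1 (hx i₁ i₂))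
  unfold hilbertSeminorm
  linarith

theorem hilbertSeminorm_mulVec_le {n : ℕ} {P : Matrix (Fin n) (Fin n) ℝ}
    (hP : P ∈ rowStochastic ℝ (Fin n)) {δ : ℝ} (hδ : ∀ i₁ i₂, ∃ j, δ ≤ P i₁ j ∧ δ ≤ P i₂ j)
    (h : Fin n → ℝ) : hilbertSeminorm (P *ᵥ h) ≤ (1 - δ) * hilbertSeminorm h := by
  rcases isEmpty_or_nonempty (Fin n) with hn | hn
  · simp [hilbertSeminorm, Real.iSup_of_isEmpty, Real.iInf_of_isEmpty]
  refine hilbertSeminorm_le_of_forall_sub_le fun i₁ i₂ => ?_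
  obtain ⟨j, hj₁, hj₂⟩ := hδ i₁ i₂
  have ht : ∀ j, h j ≤ ⨆ i, h i := le_ciSup (Set.finite_range h).bddAbove
  have hb : ∀ j, ⨅ i, h i ≤ h j := ciInf_le (Set.finite_range h).bddBelow
  have hmax := sum_mul_le_of_le_apply (fun _ => nonneg_of_mem_rowStochastic hP)
    (sum_row_of_mem_rowStochastic hP i₁) hj₁ ht
  have hmin := le_sum_mul_of_le_apply (fun _ => nonneg_of_mem_rowStochastic hP)
    (sum_row_of_mem_rowStochastic hP i₂) hj₂ hb
  simp only [mulVec, dotProduct, hilbertSeminorm]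
  linarith

theorem product_contraction_of_rows_intersect_general {n k : ℕ}
    (θ : ℝ) (hθ0 : 0 < θ)
    (Q : Fin k → Matrix (Fin n) (Fin n) ℝ)
    (hnn : ∀ m i j, 0 ≤ Q m i j) (hrow : ∀ m i, ∑ j, Q m i j = 1)
    (hmin : ∀ m i j, Q m i j ≠ 0 → θ ≤ Q m i j)
    (hinter : ∀ i₁ i₂ : Fin n, ∃ j : Fin n,
      0 < (List.ofFn Q).prod i₁ j ∧ 0 < (List.ofFn Q).prod i₂ j) :
    ∀ h : Fin n → ℝ,
      hilbertSeminorm ((List.ofFn Q).prod.mulVec h) ≤ (1 - θ ^ k) * hilbertSeminorm h := by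
  have hQ : ∀ A ∈ List.ofFn Q, A ∈ rowStochastic ℝ (Fin n) := by
    simp only [List.forall_mem_ofFn_iff, mem_rowStochastic_iff_sum]
    exact fun m => ⟨ hnn m, hrow m⟩
  have hQθ : ∀ A ∈ List.ofFn Q, ∀ i j, A i j ≠ 0 → θ ≤ A i j := by
    simpa only [List.forall_mem_ofFn_iff] using hmin
  have hentry : ∀ i j, (List.ofFn Q).prod i j ≠ 0 → θ ^ k ≤ (List.ofFn Q).prod i j := by
    intro i j hij
    simpa only [List.length_ofFn] using
      pow_length_le_list_prod_apply_of_ne_zero hθ0.le hQ hQθ hij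
  refine hilbertSeminorm_mulVec_le (Submonoid.list_prod_mem _ hQ) fun i₁ i₂ => ?_
  obtain ⟨j, hj₁, hj₂⟩ := hinter i₁ i₂
  exact ⟨j, hentry i₁ j hj₁.ne', hentry i₂ j hj₂.ne'⟩

/-- If `Q_1, …, Q_k` are row-stochastic matrices whose nonzero entries are at
least `θ`, and any two rows of the product `Q_1⋯Q_k` have intersecting
supports, then the product contracts Hilbert's seminorm with rate `1 - θ^k`. -/
theorem product_contraction_of_rows_intersect {n k : ℕ} (hn : 0 < n) (hk : 1 ≤ k)
    (θ : ℝ) (hθ0 : 0 < θ) (hθ1 : θ ≤ 1)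
    (Q : Fin k → Matrix (Fin n) (Fin n) ℝ)
    (hnn : ∀ m i j, 0 ≤ Q m i j) (hrow : ∀ m i, ∑ j, Q m i j = 1)
    (hmin : ∀ m i j, Q m i j ≠ 0 → θ ≤ Q m i j)
    (hinter : ∀ i₁ i₂ : Fin n, ∃ j : Fin n,
      0 < (List.ofFn Q).prod i₁ j ∧ 0 < (List.ofFn Q).prod i₂ j) :
    ∀ h : Fin n → ℝ,
      hilbertSeminorm ((List.ofFn Q).prod.mulVec h) ≤ (1 - θ ^ k) * hilbertSeminorm h :=
  product_contraction_of_rows_intersect_general θ hθ0 Q hnn hrow hmin hinter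
end

section
/- Let T : ℝ^n → ℝ^n be a Shapley operator, let q ≥ 1 and 0 < γ < 1 be such that T^q is a γ-contraction in the Hilbert seminorm, let η ≥ 0, and let T̃ : ℝ^n → ℝ^n satisfy ‖T̃(x) − T(x)‖_∞ ≤ η for all x. Define R(x) = x − t(x)·e and x̃_k = (R∘T̃)^k(0). Then for every integer k ≥ 0, ‖x̃_{qk} − T̃(x̃_{qk})‖_H ≤ η(2 + 4q/(1 − γ)) + γ^k ‖T(0)‖_H. -/
theorem le_pow_mul_add_div_one_sub_of_le_mul_add {a : ℕ → ℝ} {γ ε : ℝ} (hγ0 : 0 ≤ γ)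
    (hγ1 : γ < 1) (hε : 0 ≤ ε) (ha : ∀ k, a (k + 1) ≤ γ * a k + ε) (k : ℕ) :
    a k ≤ γ ^ k * a 0 + ε / (1 - γ) := by
  have h1γ : 0 < 1 - γ := sub_pos.mpr hγ1
  induction k with
  | zero => simpa using div_nonneg hε h1γ.le
  | succ k ih =>
    have hfix : γ * (ε / (1 - γ)) + ε = ε / (1 - γ) := by field_simp; ring
    calc a (k + 1) ≤ γ * a k + ε := ha k
      _ ≤ γ * (γ ^ k * a 0 + ε / (1 - γ)) + ε := by gcongr
      _ = γ ^ (k + 1) * a 0 + ε / (1 - γ) := by linear_combination hfix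

namespace hilbertSeminorm

variable {n : ℕ} [NeZero n]

theorem le_sub_of_forall_le {x : Fin n → ℝ} {a b : ℝ} (ha : ∀ i, x i ≤ a) (hb : ∀ i, b ≤ x i) :
    hilbertSeminorm x ≤ a - b :=
  sub_le_sub (ciSup_le ha) (le_ciInf hb)

theorem add_le (x y : Fin n → ℝ) :
    hilbertSeminorm (x + y) ≤ hilbertSeminorm x + hilbertSeminorm y := by
  calc hilbertSeminorm (x + y) ≤ ((⨆ i, x i) + ⨆ i, y i) - ((⨅ i, x i) + ⨅ i, y i) :=
        le_sub_of_forall_le (fun i => add_le_add (Finite.le_ciSup x i) (Finite.le_ciSup y i))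
          (fun i => add_le_add (Finite.ciInf_le x i) (Finite.ciInf_le y i))
    _ = hilbertSeminorm x + hilbertSeminorm y := by unfold hilbertSeminorm; ring

theorem sub_le_sub_add_sub (x y z : Fin n → ℝ) :
    hilbertSeminorm (x - z) ≤ hilbertSeminorm (x - y) + hilbertSeminorm (y - z) := by
  simpa using add_le (x - y) (y - z)

theorem sub_comm (x y : Fin n → ℝ) : hilbertSeminorm (x - y) = hilbertSeminorm (y - x) := by
  have key : ∀ x y : Fin n → ℝ, hilbertSeminorm (x - y) ≤ hilbertSeminorm (y - x) := by
    intro x y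
    calc hilbertSeminorm (x - y) ≤ (-⨅ i, (y - x) i) - -⨆ i, (y - x) i :=
          le_sub_of_forall_le
            (fun i => by
              have h : (⨅ j, (y - x) j) ≤ y i - x i := Finite.ciInf_le (y - x) i
              exact show x i - y i ≤ _ by linarith)
            (fun i => by
              have h : y i - x i ≤ ⨆ j, (y - x) j := Finite.le_ciSup (y - x) i
              exact show _ ≤ x i - y i by linarith)
      _ = hilbertSeminorm (y - x) := by unfold hilbertSeminorm; ring
  exact (key x y).antisymm (key y x)

theorem add_const (x : Fin n → ℝ) (c : ℝ) :
    hilbertSeminorm (fun i => x i + c) = hilbertSeminorm x := by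
  unfold hilbertSeminorm
  rw [← ciSup_add (Finite.bddAbove_range x), ← ciInf_add (Finite.bddBelow_range x)]
  ring

theorem add_const_sub (x y : Fin n → ℝ) (c : ℝ) :
    hilbertSeminorm ((fun i => x i + c) - y) = hilbertSeminorm (x - y) := by
  rw [← add_const (x - y) c]
  congr 1
  funext i
  simp only [Pi.sub_apply]
  ring

theorem le_two_mul_norm (x : Fin n → ℝ) : hilbertSeminorm x ≤ 2 * ‖x‖ := by
  have hx : ∀ i, |x i| ≤ ‖x‖ := fun i => (Real.norm_eq_abs _).symm.trans_le (norm_le_pi_norm x i)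
  have h := le_sub_of_forall_le (fun i => (abs_le.mp (hx i)).2) (fun i => (abs_le.mp (hx i)).1)
  linarith

theorem map_sub_map_le_of_monotone {T : (Fin n → ℝ) → (Fin n → ℝ)} (hmono : Monotone T)
    (hhom : ∀ (x : Fin n → ℝ) (c : ℝ), T (fun i => x i + c) = fun i => T x i + c)
    (x y : Fin n → ℝ) :
    hilbertSeminorm (T x - T y) ≤ hilbertSeminorm (x - y) := by
  set t := ⨆ i, (x - y) i
  set b := ⨅ i, (x - y) i
  have hx : x ≤ fun i => y i + t := fun i => by
    have h : x i - y i ≤ t := Finite.le_ciSup (x - y) i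
    exact show x i ≤ y i + t by linarith
  have hy : y ≤ fun i => x i + -b := fun i => by
    have h : b ≤ x i - y i := Finite.ciInf_le (x - y) i
    exact show y i ≤ x i + -b by linarith
  have hTx := hmono hx
  have hTy := hmono hy
  rw [hhom] at hTx hTy
  exact le_sub_of_forall_le
    (fun i => show T x i - T y i ≤ t by linarith [(hTx i : T x i ≤ T y i + t)])
    (fun i => show b ≤ T x i - T y i by linarith [(hTy i : T y i ≤ T x i + -b)])

section Perturbation

variable {S T : (Fin n → ℝ) → (Fin n → ℝ)} {δ : ℝ}

theorem iterate_sub_iterate_le (hT : ∀ x y, hilbertSeminorm (T x - T y) ≤ hilbertSeminorm (x - y))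
    (hST : ∀ x, hilbertSeminorm (S x - T x) ≤ δ) (j : ℕ) (x : Fin n → ℝ) :
    hilbertSeminorm (S^[j] x - T^[j] x) ≤ j * δ := by
  induction j with
  | zero => simp [hilbertSeminorm]
  | succ j ih =>
    rw [Function.iterate_succ_apply', Function.iterate_succ_apply']
    calc hilbertSeminorm (S (S^[j] x) - T (T^[j] x))
        ≤ hilbertSeminorm (S (S^[j] x) - T (S^[j] x)) +
            hilbertSeminorm (T (S^[j] x) - T (T^[j] x)) := sub_le_sub_add_sub _ _ _
      _ ≤ δ + j * δ := add_le_add (hST _) ((hT _ _).trans ih)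
      _ = (j + 1 : ℕ) * δ := by push_cast; ring

theorem iterate_sub_iterate_le_mul_add {q : ℕ} {γ : ℝ}
    (hT : ∀ x y, hilbertSeminorm (T x - T y) ≤ hilbertSeminorm (x - y))
    (hcontr : ∀ x y, hilbertSeminorm (T^[q] x - T^[q] y) ≤ γ * hilbertSeminorm (x - y))
    (hST : ∀ x, hilbertSeminorm (S x - T x) ≤ δ) (x y : Fin n → ℝ) :
    hilbertSeminorm (S^[q] x - S^[q] y) ≤ γ * hilbertSeminorm (x - y) + 2 * q * δ := by
  have hx := iterate_sub_iterate_le hT hST q x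
  have hy := iterate_sub_iterate_le hT hST q y
  rw [sub_comm] at hy
  have := sub_le_sub_add_sub (S^[q] x) (T^[q] x) (S^[q] y)
  have := sub_le_sub_add_sub (T^[q] x) (T^[q] y) (S^[q] y)
  linarith [hcontr x y]

theorem iterate_mul_sub_iterate_mul_le {q : ℕ} {γ : ℝ} (hγ0 : 0 ≤ γ) (hγ1 : γ < 1) (hδ : 0 ≤ δ)
    (hT : ∀ x y, hilbertSeminorm (T x - T y) ≤ hilbertSeminorm (x - y))
    (hcontr : ∀ x y, hilbertSeminorm (T^[q] x - T^[q] y) ≤ γ * hilbertSeminorm (x - y))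
    (hST : ∀ x, hilbertSeminorm (S x - T x) ≤ δ) (k : ℕ) (x y : Fin n → ℝ) :
    hilbertSeminorm (S^[q * k] x - S^[q * k] y) ≤
      γ ^ k * hilbertSeminorm (x - y) + 2 * q * δ / (1 - γ) := by
  simpa using le_pow_mul_add_div_one_sub_of_le_mul_add
    (a := fun k => hilbertSeminorm (S^[q * k] x - S^[q * k] y)) hγ0 hγ1 (by positivity)
    (fun k => by
      rw [Nat.mul_succ, add_comm, Function.iterate_add_apply, Function.iterate_add_apply]
      exact iterate_sub_iterate_le_mul_add hT hcontr hST _ _) k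

end Perturbation

end hilbertSeminorm

open hilbertSeminorm in
theorem approximate_residual_bound_general {n : ℕ} (hn : 0 < n)
    (T : (Fin n → ℝ) → (Fin n → ℝ))
    (hmono : Monotone T)
    (hhom : ∀ (x : Fin n → ℝ) (c : ℝ), T (fun i => x i + c) = fun i => T x i + c)
    (q : ℕ) (γ : ℝ) (hγ0 : 0 < γ) (hγ1 : γ < 1)
    (hcontr : ∀ x y : Fin n → ℝ,
      hilbertSeminorm (T^[q] x - T^[q] y) ≤ γ * hilbertSeminorm (x - y))
    (η : ℝ) (hη : 0 ≤ η)
    (Ttil : (Fin n → ℝ) → (Fin n → ℝ))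
    (hTtil : ∀ x : Fin n → ℝ, ‖Ttil x - T x‖ ≤ η)
    (R : (Fin n → ℝ) → (Fin n → ℝ))
    (hR : R = fun x => fun i => x i - ⨆ j, x j) :
    ∀ k : ℕ,
      hilbertSeminorm ((R ∘ Ttil)^[q * k] 0 - Ttil ((R ∘ Ttil)^[q * k] 0)) ≤
        η * (2 + 4 * q / (1 - γ)) + γ ^ k * hilbertSeminorm (T 0) := by
  have : NeZero n := ⟨hn.ne'⟩
  intro k
  set S := R ∘ Ttil
  have hS : ∀ x, S x = fun i => Ttil x i + -⨆ j, Ttil x j := fun x => by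
    simp [S, hR, sub_eq_add_neg]
  have hST : ∀ x, hilbertSeminorm (S x - T x) ≤ 2 * η := fun x => by
    rw [hS, add_const_sub]
    linarith [le_two_mul_norm (Ttil x - T x), hTtil x]
  have hiter := iterate_mul_sub_iterate_mul_le hγ0.le hγ1 (by positivity)
    (map_sub_map_le_of_monotone hmono hhom) hcontr hST k 0 (S 0)
  have hS0 : hilbertSeminorm (0 - S 0) ≤ hilbertSeminorm (T 0) + 2 * η := by
    have := sub_le_sub_add_sub 0 (T 0) (S 0)
    rw [sub_comm 0 (T 0), sub_zero, sub_comm (T 0) (S 0)] at this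
    linarith [hST 0]
  have hres : hilbertSeminorm (S^[q * k] 0 - Ttil (S^[q * k] 0)) =
      hilbertSeminorm (S^[q * k] 0 - S^[q * k] (S 0)) := by
    rw [← Function.iterate_succ_apply, Function.iterate_succ_apply', sub_comm _ (S _), hS,
      add_const_sub, sub_comm]
  have hγkS0 := mul_le_mul_of_nonneg_left hS0 (pow_nonneg hγ0.le k)
  have hγkη : γ ^ k * (2 * η) ≤ 2 * η :=
    mul_le_of_le_one_left (by positivity) (pow_le_one₀ hγ0.le hγ1.le)
  have hdiv : 2 * q * (2 * η) / (1 - γ) = η * (4 * q / (1 - γ)) := by ring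
  rw [hdiv] at hiter
  rw [mul_add] at hγkS0
  rw [hres, mul_add]
  linarith

/-- Residual bound for approximate relative value iteration: if `T^q` is a
`γ`-contraction in Hilbert's seminorm and `T̃` approximates `T` up to `η` in
the sup-norm, then the approximate iterates `x̃_k = (R∘T̃)^k(0)` satisfy
`‖x̃_{qk} - T̃(x̃_{qk})‖_H ≤ η(2 + 4q/(1-γ)) + γ^k ‖T(0)‖_H`. -/
theorem approximate_residual_bound {n : ℕ} (hn : 0 < n)
    (T : (Fin n → ℝ) → (Fin n → ℝ))
    (hmono : Monotone T)
    (hhom : ∀ (x : Fin n → ℝ) (c : ℝ), T (fun i => x i + c) = fun i => T x i + c)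
    (q : ℕ) (hq : 1 ≤ q) (γ : ℝ) (hγ0 : 0 < γ) (hγ1 : γ < 1)
    (hcontr : ∀ x y : Fin n → ℝ,
      hilbertSeminorm (T^[q] x - T^[q] y) ≤ γ * hilbertSeminorm (x - y))
    (η : ℝ) (hη : 0 ≤ η)
    (Ttil : (Fin n → ℝ) → (Fin n → ℝ))
    (hTtil : ∀ x : Fin n → ℝ, ‖Ttil x - T x‖ ≤ η)
    (R : (Fin n → ℝ) → (Fin n → ℝ))
    (hR : R = fun x => fun i => x i - ⨆ j, x j) :
    ∀ k : ℕ,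
      hilbertSeminorm ((R ∘ Ttil)^[q * k] 0 - Ttil ((R ∘ Ttil)^[q * k] 0)) ≤
        η * (2 + 4 * q / (1 - γ)) + γ ^ k * hilbertSeminorm (T 0) :=
  approximate_residual_bound_general hn T hmono hhom q γ hγ0 hγ1 hcontr η hη Ttil hTtil R hR
end
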